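/- arXiv:2401.00347 — 4 statements merged into one kernel-verified Lean document; each statement's English description precedes it below -/
import Mathlib

section
/- If G is a connected betweenness-uniform graph of diameter at least 3, then B(G) ≥ 1. -/
open SimpleGraph Finset BigOperators

namespace BUG

variable {V : Type*}

/-- Number of shortest `v`–`w` paths (walks of length `dist v w`). -/
noncomputable def sigma (G : SimpleGraph V) (v w : V) : ℕ :=
  Nat.card {p : G.Walk v w // p.length = G.dist v w}

/-- Number of shortest `v`–`w` paths containing `x` as an internal vertex. -/
noncomputable def sigmaVia (G : SimpleGraph V) (v w x : V) : ℕ :=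
  Nat.card {p : G.Walk v w // p.length = G.dist v w ∧ x ∈ p.support ∧ x ≠ v ∧ x ≠ w}

/-- Betweenness centrality of a vertex. -/
noncomputable def btw [Fintype V] [DecidableEq V] (G : SimpleGraph V) (x : V) : ℝ :=
  (1/2) * ∑ v : V, ∑ w : V,
    if v ≠ w then (sigmaVia G v w x : ℝ) / (sigma G v w : ℝ) else 0

/-- Average betweenness centrality of a graph. -/
noncomputable def avgBtw [Fintype V] [DecidableEq V] (G : SimpleGraph V) : ℝ :=
  (∑ x : V, btw G x) / (Fintype.card V)

/-- A graph is betweenness-uniform (a BUG) if all vertices have equal betweenness. -/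
def IsBUG [Fintype V] [DecidableEq V] (G : SimpleGraph V) : Prop :=
  ∀ x y : V, btw G x = btw G y

/-- Vertices close to the edge `e`: its endpoints and their neighbours. -/
def closeSet (H : SimpleGraph V) (e : Sym2 V) : Set V :=
  {v | ∃ u ∈ e, v = u ∨ H.Adj v u}

/-- Edges close to the vertex `x`. -/
def closeEdges (H : SimpleGraph V) (x : V) : Set (Sym2 V) :=
  {e ∈ H.edgeSet | x ∈ closeSet H e}

/-- Weight of an edge: `1/(n - |closeSet e|)`. -/
noncomputable def weight [Fintype V] (H : SimpleGraph V) (e : Sym2 V) : ℝ :=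
  1 / ((Fintype.card V : ℝ) - (closeSet H e).ncard)

open Classical in
/-- Co-betweenness of a vertex: total weight of the edges close to it. -/
noncomputable def coB [Fintype V] [DecidableEq V] (H : SimpleGraph V) (x : V) : ℝ :=
  ∑ e : Sym2 V, if e ∈ closeEdges H x then weight H e else 0

open Classical in
/-- Total weight of all edges of `H`. -/
noncomputable def totalWeight [Fintype V] [DecidableEq V] (H : SimpleGraph V) : ℝ :=
  ∑ e : Sym2 V, if e ∈ H.edgeSet then weight H e else 0

/-- `C` is (the vertex set of) a connected component of `B`. -/
def IsComponent (B : SimpleGraph V) (C : Set V) : Prop :=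
  C.Nonempty ∧ (∀ u ∈ C, ∀ v, B.Adj u v → v ∈ C) ∧ (B.induce C).Connected

/-- The star `K_{1,ℓ}` with center `0`. -/
def starG (ℓ : ℕ) : SimpleGraph (Fin (ℓ+1)) :=
  SimpleGraph.fromRel (fun i _ => i = 0)

/-- Disjoint union of two graphs. -/
def sumGraph {α β : Type*} (G : SimpleGraph α) (H : SimpleGraph β) :
    SimpleGraph (α ⊕ β) where
  Adj x y := Sum.LiftRel G.Adj H.Adj x y
  symm := ⟨by rintro (a|a) (b|b) h <;> cases h <;> constructor <;> apply SimpleGraph.Adj.symm <;>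
    assumption⟩
  loopless := ⟨by rintro (a|a) h <;> cases h <;> exact SimpleGraph.irrefl _ ‹_›⟩

/-- Disjoint union of `k` copies of a graph `H`. -/
def copies {β : Type*} (k : ℕ) (H : SimpleGraph β) : SimpleGraph (Fin k × β) where
  Adj p q := p.1 = q.1 ∧ H.Adj p.2 q.2
  symm := ⟨by rintro ⟨a,i⟩ ⟨b,j⟩ ⟨h1,h2⟩; exact ⟨h1.symm, h2.symm⟩⟩
  loopless := ⟨by rintro ⟨a,i⟩ ⟨-,h⟩; exact SimpleGraph.irrefl _ h⟩


section Aux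

variable [Fintype V] [DecidableEq V]

private lemma count_internal (G : SimpleGraph V) {v w : V} (hvw : v ≠ w) (p : G.Walk v w)
    (hp : p.IsPath) :
    (univ.filter fun x : V => x ∈ p.support ∧ x ≠ v ∧ x ≠ w).card = p.length - 1 := by
  have h1 : (univ.filter fun x : V => x ∈ p.support ∧ x ≠ v ∧ x ≠ w)
      = p.support.toFinset \ {v, w} := by
    ext x
    simp only [Finset.mem_filter, Finset.mem_univ, true_and, Finset.mem_sdiff,
      List.mem_toFinset, Finset.mem_insert, Finset.mem_singleton]
    tauto
  have hsub : ({v, w} : Finset V) ⊆ p.support.toFinset := by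
    intro x hx
    simp only [Finset.mem_insert, Finset.mem_singleton] at hx
    rw [List.mem_toFinset]
    rcases hx with rfl | rfl
    · exact p.start_mem_support
    · exact p.end_mem_support
  rw [h1, Finset.card_sdiff_of_subset hsub, List.toFinset_card_of_nodup hp.support_nodup,
    SimpleGraph.Walk.length_support, Finset.card_pair hvw]
  omega

private lemma sum_sigmaVia (G : SimpleGraph V) {v w : V} (hvw : v ≠ w) :
    ∑ x : V, sigmaVia G v w x = (G.dist v w - 1) * sigma G v w := by
  classical
  haveI : DecidableRel G.Adj := Classical.decRel _
  have hcard : ∀ x : V, sigmaVia G v w x =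
      (univ.filter fun q : {p : G.Walk v w // p.length = G.dist v w} =>
        x ∈ q.1.support ∧ x ≠ v ∧ x ≠ w).card := by
    intro x
    rw [sigmaVia, ← Nat.card_congr (Equiv.subtypeSubtypeEquivSubtypeInter
      (fun p : G.Walk v w => p.length = G.dist v w)
      (fun p => x ∈ p.support ∧ x ≠ v ∧ x ≠ w)),
      Nat.card_eq_fintype_card, Fintype.card_subtype]
  calc ∑ x : V, sigmaVia G v w x
      = ∑ x : V, ∑ q : {p : G.Walk v w // p.length = G.dist v w},
          if x ∈ q.1.support ∧ x ≠ v ∧ x ≠ w then 1 else 0 := by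
        refine Finset.sum_congr rfl fun x _ => ?_
        rw [hcard x, Finset.card_filter]
    _ = ∑ q : {p : G.Walk v w // p.length = G.dist v w}, ∑ x : V,
          if x ∈ q.1.support ∧ x ≠ v ∧ x ≠ w then 1 else 0 := Finset.sum_comm
    _ = ∑ q : {p : G.Walk v w // p.length = G.dist v w},
          (univ.filter fun x : V => x ∈ q.1.support ∧ x ≠ v ∧ x ≠ w).card := by
        exact Finset.sum_congr rfl fun q _ => (Finset.card_filter _ _).symm
    _ = ∑ _q : {p : G.Walk v w // p.length = G.dist v w}, (G.dist v w - 1) := by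
        refine Finset.sum_congr rfl fun q _ => ?_
        have hp := q.1.isPath_of_length_eq_dist q.2
        rw [count_internal G hvw q.1 hp, q.2]
    _ = (G.dist v w - 1) * sigma G v w := by
        rw [Finset.sum_const, smul_eq_mul, mul_comm, Finset.card_univ, sigma,
          Nat.card_eq_fintype_card]

private lemma sigma_pos (G : SimpleGraph V) (hG : G.Connected) (v w : V) :
    0 < sigma G v w := by
  classical
  haveI : DecidableRel G.Adj := Classical.decRel _
  obtain ⟨p, hp⟩ := hG.exists_walk_length_eq_dist v w
  haveI : Nonempty {p : G.Walk v w // p.length = G.dist v w} := ⟨⟨p, hp⟩⟩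
  rw [sigma]
  exact Nat.card_pos

private lemma sum_btw (G : SimpleGraph V) (hG : G.Connected) :
    ∑ x : V, btw G x =
      (1/2) * ∑ v : V, ∑ w : V, if v ≠ w then ((G.dist v w - 1 : ℕ) : ℝ) else 0 := by
  unfold btw
  rw [← Finset.mul_sum]
  congr 1
  rw [Finset.sum_comm]
  refine Finset.sum_congr rfl fun v _ => ?_
  rw [Finset.sum_comm]
  refine Finset.sum_congr rfl fun w _ => ?_
  by_cases h : v = w
  · simp [h]
  · simp only [if_pos h]
    rw [← Finset.sum_div, ← Nat.cast_sum, sum_sigmaVia G h, Nat.cast_mul]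
    have hσ : (sigma G v w : ℝ) ≠ 0 := by
      exact_mod_cast (sigma_pos G hG v w).ne'
    rw [mul_div_assoc, div_self hσ, mul_one]

private lemma sum_lb (t : V → V → ℕ) (u w : V) (hne : u ≠ w)
    (tsymm : ∀ a b, t a b = t b a) (huw2 : 2 ≤ t u w)
    (hkey : ∀ x, x ≠ u → x ≠ w → 1 ≤ t u x + t x w) :
    2 * Fintype.card V ≤ ∑ v : V, ∑ x : V, t v x := by
  classical
  set A : Finset V := univ \ {u, w} with hA
  have split : ∀ f : V → ℕ, ∑ a : V, f a = (∑ a ∈ A, f a) + (f u + f w) := fun f => by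
    rw [hA, ← Finset.sum_pair hne, Finset.sum_sdiff (Finset.subset_univ _)]
  have hAcard : A.card = Fintype.card V - 2 := by
    rw [hA, Finset.card_sdiff_of_subset (Finset.subset_univ _), Finset.card_pair hne, Finset.card_univ]
  have hn2 : 2 ≤ Fintype.card V := Fintype.one_lt_card_iff_nontrivial.mpr ⟨⟨u, w, hne⟩⟩
  have hmemA : ∀ v ∈ A, v ≠ u ∧ v ≠ w := by
    intro v hv; rw [hA, Finset.mem_sdiff] at hv; simpa using hv.2
  have hbound : 2 * A.card ≤ ∑ v ∈ A, ((t v u + t v w) + (t u v + t w v)) := by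
    calc 2 * A.card = ∑ _v ∈ A, 2 := by rw [Finset.sum_const, smul_eq_mul, mul_comm]
      _ ≤ _ := Finset.sum_le_sum fun v hv => by
          obtain ⟨h1, h2⟩ := hmemA v hv
          have hk := hkey v h1 h2
          rw [tsymm v u, tsymm w v]
          omega
  have hS : ∑ v : V, ∑ x : V, t v x
      = ∑ v ∈ A, ((∑ x ∈ A, t v x) + (t v u + t v w))
        + (((∑ x ∈ A, t u x) + (t u u + t u w)) + ((∑ x ∈ A, t w x) + (t w u + t w w))) := by
    rw [split (fun v => ∑ x : V, t v x)]
    congr 1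
    · exact Finset.sum_congr rfl fun v _ => split (t v)
    · rw [split (t u), split (t w)]
  have hX : ∑ v ∈ A, ((t v u + t v w) + (t u v + t w v))
      = (∑ v ∈ A, ((t v u + t v w))) + ((∑ v ∈ A, t u v) + (∑ v ∈ A, t w v)) := by
    simp only [Finset.sum_add_distrib]
  have hle1 : ∑ v ∈ A, (t v u + t v w) ≤ ∑ v ∈ A, ((∑ x ∈ A, t v x) + (t v u + t v w)) :=
    Finset.sum_le_sum fun v _ => Nat.le_add_left _ _
  have htwu : t w u = t u w := tsymm w u
  rw [hS]
  omega
  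
end Aux

/-- A connected betweenness-uniform graph of diameter at least 3 has `B(G) ≥ 1`. -/
theorem stmt5 {V : Type*} [Fintype V] [DecidableEq V] (G : SimpleGraph V)
    (hG : G.Connected) (hbug : IsBUG G) (hdiam : 3 ≤ G.diam) :
    1 ≤ avgBtw G := by
  classical
  haveI : Nonempty V := hG.nonempty
  have hcard : (0:ℝ) < Fintype.card V := by exact_mod_cast Fintype.card_pos
  obtain ⟨u, w, huw⟩ := G.exists_dist_eq_diam
  have hd3 : 3 ≤ G.dist u w := huw ▸ hdiam
  have hne : u ≠ w := by
    rintro rfl; rw [SimpleGraph.dist_self] at hd3; omega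
  have hlb : 2 * Fintype.card V ≤
      ∑ v : V, ∑ x : V, (if v ≠ x then G.dist v x - 1 else 0) := by
    refine sum_lb (fun a b => if a ≠ b then G.dist a b - 1 else 0) u w hne ?_ ?_ ?_
    · intro a b
      rcases eq_or_ne a b with rfl | hab
      · simp
      · simp only [if_pos hab, if_pos hab.symm, SimpleGraph.dist_comm]
    · show 2 ≤ if u ≠ w then G.dist u w - 1 else 0
      rw [if_pos hne]; omega
    · intro x hxu hxw
      show 1 ≤ (if u ≠ x then G.dist u x - 1 else 0) + (if x ≠ w then G.dist x w - 1 else 0)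
      have h1 : 0 < G.dist u x := hG.pos_dist_of_ne (Ne.symm hxu)
      have h2 : 0 < G.dist x w := hG.pos_dist_of_ne hxw
      have h3 : G.dist u w ≤ G.dist u x + G.dist x w := hG.dist_triangle
      rw [if_pos (fun hc : u = x => hxu hc.symm), if_pos hxw]
      omega
  rw [avgBtw, sum_btw G hG, le_div_iff₀ hcard]
  have hcast : ∑ v : V, ∑ w : V, (if v ≠ w then ((G.dist v w - 1 : ℕ) : ℝ) else 0)
      = ((∑ v : V, ∑ w : V, if v ≠ w then G.dist v w - 1 else 0 : ℕ) : ℝ) := by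
    rw [Nat.cast_sum]
    refine Finset.sum_congr rfl fun v _ => ?_
    rw [Nat.cast_sum]
    refine Finset.sum_congr rfl fun x _ => ?_
    split <;> simp
  rw [hcast]
  have : ((2 * Fintype.card V : ℕ) : ℝ) ≤
      ((∑ v : V, ∑ x : V, (if v ≠ x then G.dist v x - 1 else 0) : ℕ) : ℝ) := by
    exact_mod_cast hlb
  push_cast at this ⊢
  linarith

end BUG
end

section
/- Let H be a graph with two vertices x, y such that the set of edges close to x is a proper subset of the set of edges close to y. Then H cannot be a connected component of the complement Ḡ of a betweenness-uniform graph G where Ḡ is disconnected. -/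
open SimpleGraph Finset BigOperators

namespace BUG

variable {V : Type*}

section AuxLemmas
variable {V : Type*}

lemma walk_len1 {G : SimpleGraph V} {u w : V} (p : G.Walk u w) (hp : p.length = 1) :
    ∃ h : G.Adj u w, p = SimpleGraph.Walk.cons h SimpleGraph.Walk.nil := by
  match p with
  | .nil => simp at hp
  | .cons h q =>
    match q with
    | .nil => exact ⟨h, rfl⟩
    | .cons h' r => simp [SimpleGraph.Walk.length_cons] at hp

lemma walk_len2 {G : SimpleGraph V} {u w : V} (p : G.Walk u w) (hp : p.length = 2) :
    ∃ (v : V) (h1 : G.Adj u v) (h2 : G.Adj v w),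
      p = SimpleGraph.Walk.cons h1 (SimpleGraph.Walk.cons h2 SimpleGraph.Walk.nil) := by
  match p with
  | .nil => simp at hp
  | .cons h q =>
    match q with
    | .nil => simp at hp
    | .cons h' r =>
      match r with
      | .nil => exact ⟨_, h, h', rfl⟩
      | .cons h'' s => simp [SimpleGraph.Walk.length_cons] at hp

lemma dist_eq_two {G : SimpleGraph V} {u w z : V} (hne : u ≠ w) (hnadj : ¬G.Adj u w)
    (h1 : G.Adj u z) (h2 : G.Adj z w) : G.dist u w = 2 := by
  have hle : G.dist u w ≤ 2 := by
    simpa using SimpleGraph.dist_le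
      (SimpleGraph.Walk.cons h1 (SimpleGraph.Walk.cons h2 SimpleGraph.Walk.nil))
  have h0 : G.dist u w ≠ 0 := by
    rw [ne_eq, SimpleGraph.dist_eq_zero_iff_eq_or_not_reachable.not]
    push_neg
    exact ⟨hne, ⟨SimpleGraph.Walk.cons h1 (SimpleGraph.Walk.cons h2 SimpleGraph.Walk.nil)⟩⟩
  have hone : G.dist u w ≠ 1 := by
    rw [ne_eq, SimpleGraph.dist_eq_one_iff_adj]; exact hnadj
  omega

noncomputable def sigmaEquiv {G : SimpleGraph V} {u w : V} (hd : G.dist u w = 2) :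
    {p : G.Walk u w // p.length = G.dist u w} ≃ {z : V // G.Adj u z ∧ G.Adj z w} where
  toFun p := ⟨p.1.getVert 1, by
    have hl : p.1.length = 2 := p.2.trans hd
    obtain ⟨v, h1, h2, hp⟩ := walk_len2 p.1 hl
    simp [hp, SimpleGraph.Walk.getVert_cons_succ]
    exact ⟨h1, h2⟩⟩
  invFun z := ⟨SimpleGraph.Walk.cons z.2.1 (SimpleGraph.Walk.cons z.2.2 SimpleGraph.Walk.nil), by
    simp [hd]⟩
  left_inv := by
    rintro ⟨p, hpl⟩
    obtain ⟨v, h1, h2, hp⟩ := walk_len2 p (hpl.trans hd)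
    subst hp
    rfl
  right_inv z := by
    apply Subtype.ext
    simp [SimpleGraph.Walk.getVert_cons_succ]

lemma sigma_pos_s8 [Finite V] {G : SimpleGraph V} {u w z : V} (hne : u ≠ w) (hnadj : ¬G.Adj u w)
    (h1 : G.Adj u z) (h2 : G.Adj z w) : 0 < sigma G u w := by
  have hd := dist_eq_two hne hnadj h1 h2
  rw [sigma, Nat.card_congr (sigmaEquiv hd)]
  have : Nonempty {z : V // G.Adj u z ∧ G.Adj z w} := ⟨⟨z, h1, h2⟩⟩
  exact Nat.card_pos

lemma sigmaVia_eq_one {G : SimpleGraph V} {u w z : V} (hd : G.dist u w = 2)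
    (h1 : G.Adj u z) (h2 : G.Adj z w) : sigmaVia G u w z = 1 := by
  rw [sigmaVia, Nat.card_eq_one_iff_unique]
  constructor
  · constructor
    rintro ⟨p, hpl, hpz, hzu, hzw⟩ ⟨q, hql, hqz, hzu', hzw'⟩
    obtain ⟨a, ha1, ha2, rfl⟩ := walk_len2 p (hpl.trans hd)
    obtain ⟨b, hb1, hb2, rfl⟩ := walk_len2 q (hql.trans hd)
    simp [SimpleGraph.Walk.support_cons] at hpz hqz
    have hza : z = a := by tauto
    have hzb : z = b := by tauto
    subst hza
    subst hzb
    rfl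
  · refine ⟨⟨SimpleGraph.Walk.cons h1 (SimpleGraph.Walk.cons h2 SimpleGraph.Walk.nil),
      by simp [hd], by simp [SimpleGraph.Walk.support_cons], h1.ne', h2.ne⟩⟩

lemma sigmaVia_eq_zero_two {G : SimpleGraph V} {u w z : V} (hd : G.dist u w = 2)
    (hnc : ¬(G.Adj u z ∧ G.Adj z w)) : sigmaVia G u w z = 0 := by
  have : IsEmpty {p : G.Walk u w //
      p.length = G.dist u w ∧ z ∈ p.support ∧ z ≠ u ∧ z ≠ w} := by
    constructor
    rintro ⟨p, hpl, hpz, hzu, hzw⟩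
    obtain ⟨a, ha1, ha2, rfl⟩ := walk_len2 p (hpl.trans hd)
    simp [SimpleGraph.Walk.support_cons] at hpz
    have hza : z = a := by tauto
    subst hza
    exact hnc ⟨ha1, ha2⟩
  rw [sigmaVia]
  exact Nat.card_of_isEmpty

lemma sigmaVia_eq_zero_adj {G : SimpleGraph V} {u w z : V} (hadj : G.Adj u w) :
    sigmaVia G u w z = 0 := by
  have hd : G.dist u w = 1 := SimpleGraph.dist_eq_one_iff_adj.mpr hadj
  have : IsEmpty {p : G.Walk u w //
      p.length = G.dist u w ∧ z ∈ p.support ∧ z ≠ u ∧ z ≠ w} := by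
    constructor
    rintro ⟨p, hpl, hpz, hzu, hzw⟩
    obtain ⟨h, rfl⟩ := walk_len1 p (hpl.trans hd)
    simp [SimpleGraph.Walk.support_cons] at hpz
    tauto
  rw [sigmaVia]
  exact Nat.card_of_isEmpty

lemma mem_closeSet_pair {H : SimpleGraph V} {a b v : V} :
    v ∈ closeSet H s(a, b) ↔ (v = a ∨ H.Adj v a) ∨ (v = b ∨ H.Adj v b) := by
  simp [closeSet, Sym2.mem_iff]

end AuxLemmas

/-- If `H` has vertices `x, y` with `closeEdges x ⊊ closeEdges y`, then
`H` cannot be a connected component of a disconnected complement of a betweenness-uniform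
graph. -/
theorem stmt8 {V W : Type*} [Fintype V] [DecidableEq V] [Fintype W] [DecidableEq W]
    (H : SimpleGraph V) (x y : V) (hss : closeEdges H x ⊂ closeEdges H y)
    (B : SimpleGraph W) (hdisc : ¬B.Connected) (hbug : IsBUG Bᶜ)
    (C : Set W) (hC : IsComponent B C) :
    ¬Nonempty (H ≃g B.induce C) := by
  rintro ⟨φ⟩
  classical
  set G := Bᶜ with hG
  -- basic facts about the disconnected graph B
  obtain ⟨c0, hc0⟩ := hC.1
  have hWne : Nonempty W := ⟨c0⟩
  have hnp : ¬B.Preconnected := fun h => hdisc ⟨h⟩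
  rw [SimpleGraph.Preconnected] at hnp; push_neg at hnp
  obtain ⟨a, b, hab⟩ := hnp
  have hfar : ∀ u : W, ∃ z : W, ¬B.Reachable u z := by
    intro u
    by_cases h : B.Reachable u a
    · exact ⟨b, fun h' => hab (h.symm.trans h')⟩
    · exact ⟨a, h⟩
  have hcm : ∀ u w : W, B.Adj u w → ∃ z, G.Adj u z ∧ G.Adj z w := by
    intro u w huw
    obtain ⟨z, hz⟩ := hfar u
    refine ⟨z, ?_, ?_⟩
    · rw [hG, SimpleGraph.compl_adj]
      exact ⟨fun h => hz (h ▸ SimpleGraph.Reachable.refl u), fun h => hz h.reachable⟩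
    · rw [hG, SimpleGraph.compl_adj]
      constructor
      · rintro rfl; exact hz huw.reachable
      · intro h; exact hz (huw.reachable.trans h.symm.reachable)
  have hGnadj : ∀ u w : W, B.Adj u w → ¬G.Adj u w := by
    intro u w huw h
    rw [hG, SimpleGraph.compl_adj] at h
    exact h.2 huw
  have hdist2 : ∀ u w : W, B.Adj u w → G.dist u w = 2 := by
    intro u w huw
    obtain ⟨z, h1, h2⟩ := hcm u w huw
    exact dist_eq_two huw.ne (hGnadj u w huw) h1 h2
  have hspos : ∀ u w : W, B.Adj u w → 0 < sigma G u w := by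
    intro u w huw
    obtain ⟨z, h1, h2⟩ := hcm u w huw
    exact sigma_pos_s8 huw.ne (hGnadj u w huw) h1 h2
  -- characterisation of non-membership in the close set
  have hclose : ∀ u w z : W, B.Adj u w →
      (z ∉ closeSet B s(u, w) ↔ (G.Adj u z ∧ G.Adj z w)) := by
    intro u w z huw
    rw [mem_closeSet_pair]
    push_neg
    rw [hG]
    simp only [SimpleGraph.compl_adj]
    constructor
    · rintro ⟨⟨h1, h2⟩, ⟨h3, h4⟩⟩
      exact ⟨⟨Ne.symm h1, fun h => h2 h.symm⟩, ⟨h3, h4⟩⟩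
    · rintro ⟨⟨h1, h2⟩, ⟨h3, h4⟩⟩
      exact ⟨⟨Ne.symm h1, fun h => h2 h.symm⟩, ⟨h3, h4⟩⟩
  -- the key pointwise identity for the betweenness summand
  have hterm : ∀ z u w : W,
      (if u ≠ w then (sigmaVia G u w z : ℝ) / (sigma G u w : ℝ) else 0) =
      (if B.Adj u w then 1 / (sigma G u w : ℝ) else 0)
        - (if B.Adj u w ∧ z ∈ closeSet B s(u, w) then 1 / (sigma G u w : ℝ) else 0) := by
    intro z u w
    by_cases huw : B.Adj u w
    · have hne : u ≠ w := huw.ne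
      have hd := hdist2 u w huw
      have hs : (0 : ℝ) < (sigma G u w : ℝ) := by exact_mod_cast hspos u w huw
      by_cases hz : z ∈ closeSet B s(u, w)
      · have h0 : sigmaVia G u w z = 0 := by
          apply sigmaVia_eq_zero_two hd
          intro hcon
          exact ((hclose u w z huw).mpr hcon) hz
        simp [huw, hne, hz, h0]
      · obtain ⟨h1, h2⟩ := (hclose u w z huw).mp hz
        have h1' : sigmaVia G u w z = 1 := sigmaVia_eq_one hd h1 h2
        simp [huw, hne, hz, h1']
    · by_cases hne : u = w
      · simp [hne, huw]
      · have hadj : G.Adj u w := by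
          rw [hG, SimpleGraph.compl_adj]; exact ⟨hne, huw⟩
        have h0 : sigmaVia G u w z = 0 := sigmaVia_eq_zero_adj hadj
        simp [huw, hne, h0]
  -- rewrite betweenness as a constant minus the "close-edge" sum
  have hbtw : ∀ z : W, btw G z =
      (1/2) * (∑ u : W, ∑ w : W, (if B.Adj u w then 1 / (sigma G u w : ℝ) else 0))
      - (1/2) * (∑ u : W, ∑ w : W,
          (if B.Adj u w ∧ z ∈ closeSet B s(u, w) then 1 / (sigma G u w : ℝ) else 0)) := by
    intro z
    rw [btw, ← mul_sub]
    congr 1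
    rw [← Finset.sum_sub_distrib]
    refine Finset.sum_congr rfl fun u _ => ?_
    rw [← Finset.sum_sub_distrib]
    exact Finset.sum_congr rfl fun w _ => hterm z u w
  -- transporting the close-set relation through the isomorphism
  have hmemC : ∀ v : V, ((φ v : C) : W) ∈ C := fun v => (φ v).2
  have hadj_iff : ∀ v v' : V, H.Adj v v' ↔ B.Adj ((φ v : C) : W) ((φ v' : C) : W) := by
    intro v v'
    rw [← φ.map_adj_iff]
    rfl
  have heq_iff : ∀ v v' : V, v = v' ↔ ((φ v : C) : W) = ((φ v' : C) : W) := by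
    intro v v'
    constructor
    · rintro rfl; rfl
    · intro h
      exact φ.toEquiv.injective (Subtype.coe_injective h)
  have htrans : ∀ (v a b : V), (v ∈ closeSet H s(a, b) ↔
      ((φ v : C) : W) ∈ closeSet B s(((φ a : C) : W), ((φ b : C) : W))) := by
    intro v a b
    rw [mem_closeSet_pair, mem_closeSet_pair, heq_iff v a, heq_iff v b,
      hadj_iff v a, hadj_iff v b]
  set x' : W := ((φ x : C) : W) with hx'
  set y' : W := ((φ y : C) : W) with hy'
  -- any edge of B close to a vertex of C has both endpoints in C
  have hendC : ∀ u w c : W, B.Adj u w → c ∈ C → c ∈ closeSet B s(u, w) → u ∈ C ∧ w ∈ C := by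
    intro u w c huw hcC hcl
    rw [mem_closeSet_pair] at hcl
    have hside : u ∈ C ∨ w ∈ C := by
      rcases hcl with (h | h) | (h | h)
      · exact Or.inl (h ▸ hcC)
      · exact Or.inl (hC.2.1 c hcC u h)
      · exact Or.inr (h ▸ hcC)
      · exact Or.inr (hC.2.1 c hcC w h)
    rcases hside with h | h
    · exact ⟨h, hC.2.1 u h w huw⟩
    · exact ⟨hC.2.1 w h u huw.symm, h⟩
  -- claim (a): edges close to x' are close to y'
  have hxy_close : ∀ u w : W, B.Adj u w → x' ∈ closeSet B s(u, w) → y' ∈ closeSet B s(u, w) := by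
    intro u w huw hxcl
    obtain ⟨huC, hwC⟩ := hendC u w x' huw (hmemC x) hxcl
    set A : V := φ.symm ⟨u, huC⟩ with hA
    set D : V := φ.symm ⟨w, hwC⟩ with hD
    have hu : ((φ A : C) : W) = u := by rw [hA, φ.apply_symm_apply]
    have hw : ((φ D : C) : W) = w := by rw [hD, φ.apply_symm_apply]
    have hAD : H.Adj A D := by rw [hadj_iff, hu, hw]; exact huw
    have hxin : x ∈ closeSet H s(A, D) := by
      rw [htrans x A D, hu, hw]; exact hxcl
    have hmem : s(A, D) ∈ closeEdges H x := ⟨H.mem_edgeSet.mpr hAD, hxin⟩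
    have hmem' : s(A, D) ∈ closeEdges H y := hss.subset hmem
    have hyin : y ∈ closeSet H s(A, D) := hmem'.2
    rw [htrans y A D, hu, hw] at hyin
    exact hyin
  -- claim (b): an edge close to y' but not to x'
  obtain ⟨e0, he0y, he0x⟩ := Set.exists_of_ssubset hss
  obtain ⟨A0, D0, rfl⟩ : ∃ a b : V, e0 = s(a, b) := ⟨e0.out.1, e0.out.2, e0.out_eq.symm⟩
  have hAD0 : H.Adj A0 D0 := H.mem_edgeSet.mp he0y.1
  set u0 : W := ((φ A0 : C) : W) with hu0
  set w0 : W := ((φ D0 : C) : W) with hw0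
  have hB0 : B.Adj u0 w0 := (hadj_iff A0 D0).mp hAD0
  have hy0 : y' ∈ closeSet B s(u0, w0) := (htrans y A0 D0).mp he0y.2
  have hx0 : x' ∉ closeSet B s(u0, w0) := by
    intro h
    exact he0x ⟨H.mem_edgeSet.mpr hAD0, (htrans x A0 D0).mpr h⟩
  -- the strict inequality between the two close-edge sums
  have hlt : (∑ u : W, ∑ w : W,
        (if B.Adj u w ∧ x' ∈ closeSet B s(u, w) then 1 / (sigma G u w : ℝ) else 0)) <
      (∑ u : W, ∑ w : W,
        (if B.Adj u w ∧ y' ∈ closeSet B s(u, w) then 1 / (sigma G u w : ℝ) else 0)) := by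
    rw [← Finset.sum_product', ← Finset.sum_product']
    apply Finset.sum_lt_sum
    · rintro ⟨u, w⟩ -
      by_cases h : B.Adj u w ∧ x' ∈ closeSet B s(u, w)
      · have h' : B.Adj u w ∧ y' ∈ closeSet B s(u, w) :=
          ⟨h.1, hxy_close u w h.1 h.2⟩
        simp [h, h']
      · simp only [h, if_false]
        split_ifs with h'
        · positivity
        · exact le_refl 0
    · refine ⟨(u0, w0), Finset.mem_univ _, ?_⟩
      have h1 : ¬(B.Adj u0 w0 ∧ x' ∈ closeSet B s(u0, w0)) := fun h => hx0 h.2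
      have h2 : B.Adj u0 w0 ∧ y' ∈ closeSet B s(u0, w0) := ⟨hB0, hy0⟩
      have hs : (0 : ℝ) < (sigma G u0 w0 : ℝ) := by exact_mod_cast hspos u0 w0 hB0
      rw [if_neg h1, if_pos h2]
      exact div_pos one_pos hs
  -- conclude
  have heqb : btw G x' = btw G y' := hbug x' y'
  rw [hbtw x', hbtw y'] at heqb
  have := heqb
  linarith

end BUG
end

section
/- Let Ḡ be the complement of a betweenness-uniform graph G with B(G) < 1 and Ḡ disconnected. Then every connected component of Ḡ containing a vertex of degree at most 1 is isomorphic to a star K_{1,ℓ}, and all star components of Ḡ are stars of the same size. -/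
open SimpleGraph Finset BigOperators

namespace BUG

variable {V : Type*}

/-! ### Auxiliary lemmas -/

lemma walk_two_eq {G : SimpleGraph V} {v w : V} (p : G.Walk v w) (hp : p.length = 2) :
    ∃ (y : V) (h1 : G.Adj v y) (h2 : G.Adj y w), p = Walk.cons h1 (Walk.cons h2 Walk.nil) := by
  cases p with
  | nil => simp at hp
  | cons h q =>
    cases q with
    | nil => simp at hp
    | cons h' r =>
      cases r with
      | nil => exact ⟨_, h, h', rfl⟩
      | cons h'' r' => simp [Walk.length_cons] at hp

lemma walk_one_eq {G : SimpleGraph V} {v w : V} (p : G.Walk v w) (hp : p.length = 1) :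
    ∃ (h1 : G.Adj v w), p = Walk.cons h1 Walk.nil := by
  cases p with
  | nil => simp at hp
  | cons h q =>
    cases q with
    | nil => exact ⟨h, rfl⟩
    | cons h' r => simp [Walk.length_cons] at hp

lemma sigma_eq {G : SimpleGraph V} {v w : V} (hd : G.dist v w = 2) :
    sigma G v w = (G.commonNeighbors v w).ncard := by
  rw [sigma, hd, ← Nat.card_coe_set_eq]
  refine Nat.card_congr ⟨fun p => ⟨p.1.getVert 1, ?_⟩,
    fun y => ⟨Walk.cons ((mem_commonNeighbors G).mp y.2).1
      (Walk.cons ((mem_commonNeighbors G).mp y.2).2.symm Walk.nil), by simp⟩, ?_, ?_⟩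
  · obtain ⟨y, h1, h2, hp⟩ := walk_two_eq p.1 p.2
    rw [mem_commonNeighbors, hp]
    exact ⟨h1, h2.symm⟩
  · rintro ⟨p, hp⟩
    obtain ⟨y, h1, h2, rfl⟩ := walk_two_eq _ hp
    rfl
  · rintro ⟨y, hy⟩
    rfl

open Classical in
lemma sigmaVia_eq {G : SimpleGraph V} {v w x : V} (hd : G.dist v w = 2) :
    sigmaVia G v w x = if G.Adj v x ∧ G.Adj w x then 1 else 0 := by
  classical
  rw [sigmaVia, hd]
  by_cases hx : G.Adj v x ∧ G.Adj w x
  · rw [if_pos hx, Nat.card_eq_one_iff_unique]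
    constructor
    · refine ⟨fun p q => ?_⟩
      obtain ⟨p, hp, hps, hpv, hpw⟩ := p
      obtain ⟨q, hq, hqs, hqv, hqw⟩ := q
      obtain ⟨y1, h1, h2, rfl⟩ := walk_two_eq p hp
      obtain ⟨y2, g1, g2, rfl⟩ := walk_two_eq q hq
      simp only [Walk.support_cons, Walk.support_nil, List.mem_cons, List.mem_singleton,
        List.not_mem_nil, or_false] at hps hqs
      have hy1 : x = y1 := by tauto
      have hy2 : x = y2 := by tauto
      subst hy1; subst hy2
      rfl
    · refine ⟨⟨Walk.cons hx.1 (Walk.cons hx.2.symm Walk.nil), rfl, ?_, hx.1.ne', hx.2.ne'⟩⟩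
      simp
  · rw [if_neg hx]
    have : IsEmpty {p : G.Walk v w // p.length = 2 ∧ x ∈ p.support ∧ x ≠ v ∧ x ≠ w} := by
      refine ⟨?_⟩
      rintro ⟨p, hp, hps, hpv, hpw⟩
      obtain ⟨y, h1, h2, rfl⟩ := walk_two_eq p hp
      simp only [Walk.support_cons, Walk.support_nil, List.mem_cons, List.mem_singleton,
        List.not_mem_nil, or_false] at hps
      have hy : x = y := by tauto
      subst hy
      exact hx ⟨h1, h2.symm⟩
    simp [Nat.card_eq_zero, this]

lemma sigmaVia_adj {G : SimpleGraph V} {v w x : V} (ha : G.Adj v w) :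
    sigmaVia G v w x = 0 := by
  rw [sigmaVia, SimpleGraph.dist_eq_one_iff_adj.mpr ha]
  have : IsEmpty {p : G.Walk v w // p.length = 1 ∧ x ∈ p.support ∧ x ≠ v ∧ x ≠ w} := by
    refine ⟨?_⟩
    rintro ⟨p, hp, hps, hpv, hpw⟩
    obtain ⟨h1, rfl⟩ := walk_one_eq p hp
    simp only [Walk.support_cons, Walk.support_nil, List.mem_cons, List.mem_singleton,
      List.not_mem_nil, or_false] at hps
    tauto
  simp [Nat.card_eq_zero, this]

lemma exists_far {G : SimpleGraph V} [Nonempty V] (hdisc : ¬G.Connected) (v : V) :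
    ∃ z, ¬ G.Reachable v z := by
  rw [connected_iff] at hdisc
  push_neg at hdisc
  obtain ⟨a, b, hab⟩ : ∃ a b, ¬ G.Reachable a b := by
    by_contra h; push_neg at h; exact (hdisc (fun a b => h a b)).elim (Classical.arbitrary V)
  by_cases h : G.Reachable v a
  · exact ⟨b, fun hvb => hab (h.symm.trans hvb)⟩
  · exact ⟨a, h⟩

lemma common_mem {G : SimpleGraph V} [Nonempty V] (hdisc : ¬Gᶜ.Connected) {v w : V}
    (h : Gᶜ.Adj v w) : ∃ z, z ∈ G.commonNeighbors v w := by
  obtain ⟨z, hz⟩ := exists_far hdisc v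
  have hzv : v ≠ z := by rintro rfl; exact hz (Reachable.refl _)
  have h1 : ¬ Gᶜ.Adj v z := fun ha => hz ha.reachable
  have hzw : w ≠ z := by rintro rfl; exact hz h.reachable
  have h2 : ¬ Gᶜ.Adj w z := fun ha => hz (h.reachable.trans ha.reachable)
  rw [compl_adj] at h1 h2
  push_neg at h1 h2
  exact ⟨z, (mem_commonNeighbors G).mpr ⟨h1 hzv, h2 hzw⟩⟩

lemma dist_two {G : SimpleGraph V} [Nonempty V] (hdisc : ¬Gᶜ.Connected) {v w : V}
    (h : Gᶜ.Adj v w) : G.dist v w = 2 := by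
  obtain ⟨z, hz⟩ := common_mem hdisc h
  rw [mem_commonNeighbors] at hz
  have hle : G.dist v w ≤ 2 := by
    have := G.dist_le (Walk.cons hz.1 (Walk.cons hz.2.symm Walk.nil))
    simpa using this
  have h0 : G.dist v w ≠ 0 := by
    intro h0
    rcases dist_eq_zero_iff_eq_or_not_reachable.mp h0 with h0 | h0
    · exact (compl_adj G v w).mp h |>.1 h0
    · exact h0 ⟨Walk.cons hz.1 (Walk.cons hz.2.symm Walk.nil)⟩
  have h1 : G.dist v w ≠ 1 := fun h1 => ((compl_adj G v w).mp h).2 (dist_eq_one_iff_adj.mp h1)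
  omega

lemma cn_pos {G : SimpleGraph V} [Fintype V] [Nonempty V] (hdisc : ¬Gᶜ.Connected) {v w : V}
    (h : Gᶜ.Adj v w) : 0 < (G.commonNeighbors v w).ncard := by
  obtain ⟨z, hz⟩ := common_mem hdisc h
  exact Set.ncard_pos (Set.toFinite _) |>.mpr ⟨z, hz⟩

open Classical in
/-- The normalised contribution of the ordered pair `(v, w)` to `btw G x`. -/
noncomputable def F (G : SimpleGraph V) (x v w : V) : ℝ :=
  if Gᶜ.Adj v w then
    (if G.Adj v x ∧ G.Adj w x then (1:ℝ) else 0) / ((G.commonNeighbors v w).ncard : ℝ)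
  else 0

lemma adj_compl_of {G : SimpleGraph V} {a u : V} (hne : a ≠ u) (hna : ¬ Gᶜ.Adj a u) :
    G.Adj a u := by
  by_contra h; exact hna ((compl_adj G a u).mpr ⟨hne, h⟩)

lemma btw_eq {G : SimpleGraph V} [Fintype V] [DecidableEq V] [Nonempty V]
    (hdisc : ¬Gᶜ.Connected) (x : V) :
    btw G x = (1/2) * ∑ v : V, ∑ w : V, F G x v w := by
  rw [btw]
  congr 1
  refine Finset.sum_congr rfl (fun v _ => Finset.sum_congr rfl (fun w _ => ?_))
  rcases eq_or_ne v w with rfl | hvw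
  · simp [F]
  · rw [if_pos hvw]
    by_cases hGadj : G.Adj v w
    · have hB : ¬ Gᶜ.Adj v w := fun hc => ((compl_adj G v w).mp hc).2 hGadj
      rw [F, if_neg hB, sigmaVia_adj hGadj]
      simp
    · have hB : Gᶜ.Adj v w := (compl_adj G v w).mpr ⟨hvw, hGadj⟩
      have hd := dist_two hdisc hB
      rw [F, if_pos hB, sigma_eq hd, sigmaVia_eq hd]
      by_cases hx : G.Adj v x ∧ G.Adj w x
      · rw [if_pos hx, if_pos hx]; norm_num
      · rw [if_neg hx, if_neg hx]; norm_num

lemma F_nonneg (G : SimpleGraph V) (x v w : V) : 0 ≤ F G x v w := by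
  rw [F]; split
  · positivity
  · exact le_refl _

lemma btw_pointwise {G : SimpleGraph V} [Fintype V] [DecidableEq V] [Nonempty V]
    (hdisc : ¬Gᶜ.Connected) {x y : V} (hxy : btw G x = btw G y)
    (hle : ∀ v w, F G y v w ≤ F G x v w) : ∀ v w, F G x v w = F G y v w := by
  have hsum : ∑ p ∈ Finset.univ ×ˢ Finset.univ, (fun v w => F G y v w) p.1 p.2
      = ∑ p ∈ Finset.univ ×ˢ Finset.univ, (fun v w => F G x v w) p.1 p.2 := by
    rw [Finset.sum_product', Finset.sum_product']
    have := hxy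
    rw [btw_eq hdisc, btw_eq hdisc] at this
    field_simp at this
    exact this.symm
  have := (Finset.sum_eq_sum_iff_of_le (fun p _ => hle p.1 p.2)).mp hsum
  intro v w
  exact (this (v, w) (Finset.mem_product.mpr ⟨Finset.mem_univ _, Finset.mem_univ _⟩)).symm

lemma leaf_lemma {G : SimpleGraph V} [Fintype V] [DecidableEq V] [Nonempty V]
    (hdisc : ¬Gᶜ.Connected) (hbug : IsBUG G) {u v : V}
    (hu : Gᶜ.neighborSet u = {v}) : ∀ a b, Gᶜ.Adj a b → Gᶜ.Adj v a → b = v := by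
  classical
  have hmem : ∀ a, Gᶜ.Adj u a → a = v := by
    intro a ha
    have : a ∈ Gᶜ.neighborSet u := ha
    rw [hu] at this
    exact this
  have hle : ∀ a b, F G v a b ≤ F G u a b := by
    intro a b
    by_cases hab : Gᶜ.Adj a b
    · rw [F, F, if_pos hab, if_pos hab]
      have hc : (0:ℝ) < ((G.commonNeighbors a b).ncard : ℝ) := by
        exact_mod_cast cn_pos hdisc hab
      have himp : (G.Adj a v ∧ G.Adj b v) → (G.Adj a u ∧ G.Adj b u) := by
        rintro ⟨h1, h2⟩
        have hnua : ¬ Gᶜ.Adj u a := by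
          intro hc'; rw [hmem a hc'] at h1; exact G.irrefl h1
        have hnub : ¬ Gᶜ.Adj u b := by
          intro hc'; rw [hmem b hc'] at h2; exact G.irrefl h2
        have hua : u ≠ a := by
          rintro rfl; rw [hmem b hab] at h2; exact G.irrefl h2
        have hub : u ≠ b := by
          rintro rfl; rw [hmem a hab.symm] at h1; exact G.irrefl h1
        exact ⟨adj_compl_of (Ne.symm hua) (fun hc' => hnua hc'.symm),
               adj_compl_of (Ne.symm hub) (fun hc' => hnub hc'.symm)⟩
      have hnum : (if G.Adj a v ∧ G.Adj b v then (1:ℝ) else 0)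
          ≤ (if G.Adj a u ∧ G.Adj b u then (1:ℝ) else 0) := by
        split_ifs with h1 h2
        · exact le_refl _
        · exact absurd (himp h1) h2
        · norm_num
        · exact le_refl _
      gcongr
    · rw [F, F, if_neg hab, if_neg hab]
  have hpt := btw_pointwise hdisc (hbug u v) hle
  intro a b hab hva
  have hFv : F G v a b = 0 := by
    rw [F, if_pos hab]
    have : ¬ (G.Adj a v ∧ G.Adj b v) := by
      rintro ⟨h1, -⟩
      exact ((compl_adj G v a).mp hva).2 h1.symm
    rw [if_neg this, zero_div]
  have hFu : F G u a b = 0 := (hpt a b).trans hFv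
  rw [F, if_pos hab] at hFu
  have hc : ((G.commonNeighbors a b).ncard : ℝ) ≠ 0 := by
    have := cn_pos hdisc hab; positivity
  rw [div_eq_zero_iff] at hFu
  rcases hFu with hFu | hFu
  · have hnadj : ¬ (G.Adj a u ∧ G.Adj b u) := by
      intro h; rw [if_pos h] at hFu; norm_num at hFu
    rcases not_and_or.mp hnadj with h | h
    · rcases eq_or_ne u a with rfl | hua
      · exact hmem b hab
      · have : Gᶜ.Adj a u := (compl_adj G a u).mpr ⟨Ne.symm hua, h⟩
        have ha : a = v := hmem a this.symm
        rw [ha] at hva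
        exact absurd hva (Gᶜ.irrefl)
    · rcases eq_or_ne u b with rfl | hub
      · have : a = v := hmem a hab.symm
        rw [this] at hva
        exact absurd hva (Gᶜ.irrefl)
      · have : Gᶜ.Adj b u := (compl_adj G b u).mpr ⟨Ne.symm hub, h⟩
        exact hmem b this.symm
  · exact absurd hFu hc

lemma reach_center {B : SimpleGraph V} {C : Set V} (hC : IsComponent B C) {c : V} (hc : c ∈ C)
    (hstar : ∀ a b, B.Adj a b → B.Adj c a → b = c) :
    ∀ w ∈ C, w = c ∨ B.Adj c w := by
  have key : ∀ (a b : V) (p : B.Walk a b), (a = c ∨ B.Adj c a) → (b = c ∨ B.Adj c b) := by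
    intro a b p
    induction p with
    | nil => exact id
    | cons h q ih =>
      intro hs
      apply ih
      rcases hs with rfl | hs
      · exact Or.inr h
      · exact Or.inl (hstar _ _ h hs)
  intro w hw
  obtain ⟨p⟩ := hC.2.2.preconnected ⟨c, hc⟩ ⟨w, hw⟩
  let f : (B.induce C) →g B := ⟨Subtype.val, fun h => h⟩
  exact key c w (p.map f) (Or.inl rfl)

lemma build_iso {B : SimpleGraph V} [Fintype V] (C : Set V) (c : V) (hc : c ∈ C)
    (hadj : ∀ a b, a ∈ C → b ∈ C → (B.Adj a b ↔ a ≠ b ∧ (a = c ∨ b = c))) :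
    ∃ ℓ : ℕ, Nonempty ((B.induce C) ≃g starG ℓ) := by
  classical
  have hft : Fintype ↥C := Fintype.ofFinite _
  obtain ⟨ℓ, hℓ⟩ : ∃ ℓ, Fintype.card ↥C = ℓ + 1 := by
    have : 0 < Fintype.card ↥C := Fintype.card_pos_iff.mpr ⟨⟨c, hc⟩⟩
    exact ⟨Fintype.card ↥C - 1, by omega⟩
  refine ⟨ℓ, ⟨?_⟩⟩
  let e₀ : ↥C ≃ Fin (ℓ+1) := Fintype.equivFinOfCardEq hℓ
  let e : ↥C ≃ Fin (ℓ+1) := e₀.trans (Equiv.swap (e₀ ⟨c, hc⟩) 0)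
  have hec : e ⟨c, hc⟩ = 0 := by simp [e, Equiv.swap_apply_left]
  have he : ∀ x : ↥C, e x = 0 ↔ (x : V) = c := by
    intro x
    constructor
    · intro h
      have h2 : e x = e ⟨c, hc⟩ := by rw [h, hec]
      exact congrArg Subtype.val (e.injective h2)
    · intro h
      have : x = ⟨c, hc⟩ := Subtype.ext h
      rw [this, hec]
  refine ⟨e, @fun a b => ?_⟩
  show (starG ℓ).Adj (e a) (e b) ↔ (B.induce C).Adj a b
  have hia : (B.induce C).Adj a b ↔ B.Adj a.1 b.1 := Iff.rfl
  rw [hia, hadj a.1 b.1 a.2 b.2, starG, fromRel_adj]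
  constructor
  · rintro ⟨h1, h2⟩
    refine ⟨fun hh => h1 (by rw [Subtype.ext hh]), ?_⟩
    rcases h2 with h2 | h2
    · exact Or.inl ((he a).mp h2)
    · exact Or.inr ((he b).mp h2)
  · rintro ⟨h1, h2⟩
    refine ⟨fun hh => h1 (congrArg Subtype.val (e.injective hh)), ?_⟩
    rcases h2 with h2 | h2
    · exact Or.inl ((he a).mpr h2)
    · exact Or.inr ((he b).mpr h2)

lemma comp_ne_univ {B : SimpleGraph V} (hdisc : ¬B.Connected) {C : Set V}
    (hC : IsComponent B C) : C ≠ Set.univ := by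
  rintro rfl
  exact hdisc (Connected.map (induceUnivIso B).toHom (induceUnivIso B).toEquiv.surjective hC.2.2)

section Star

set_option linter.unusedSectionVars false

variable {G : SimpleGraph V} [Fintype V] [DecidableEq V] [Nonempty V]
  {C : Set V} {ℓ : ℕ} (hC : IsComponent Gᶜ C) (ψ : (Gᶜ.induce C) ≃g starG ℓ)

include hC ψ

lemma star_S1 : ∀ a b, (ha : a ∈ C) → (hb : b ∈ C) →
    (Gᶜ.Adj a b ↔ a ≠ b ∧ (a = ((ψ.symm 0 : ↥C) : V) ∨ b = ((ψ.symm 0 : ↥C) : V))) := by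
  intro a b ha hb
  have h1 : Gᶜ.Adj a b ↔ (starG ℓ).Adj (ψ ⟨a, ha⟩) (ψ ⟨b, hb⟩) :=
    (ψ.map_adj_iff (v := ⟨a, ha⟩) (w := ⟨b, hb⟩)).symm
  rw [h1]
  simp only [starG, fromRel_adj]
  have hz : ∀ (x : V) (hx : x ∈ C), (ψ ⟨x, hx⟩ = 0 ↔ x = ((ψ.symm 0 : ↥C) : V)) := by
    intro x hx
    constructor
    · intro h
      have : (⟨x, hx⟩ : ↥C) = ψ.symm 0 := by
        apply ψ.toEquiv.injective; simp [h]
      exact congrArg Subtype.val this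
    · intro h
      have : (⟨x, hx⟩ : ↥C) = ψ.symm 0 := Subtype.ext h
      rw [this]; simp
  constructor
  · rintro ⟨hne, h2⟩
    refine ⟨fun hh => hne (by cases hh; rfl), ?_⟩
    rcases h2 with h2 | h2
    · exact Or.inl ((hz a ha).mp h2)
    · exact Or.inr ((hz b hb).mp h2)
  · rintro ⟨hne, h2⟩
    refine ⟨fun hh => hne (congrArg Subtype.val (ψ.toEquiv.injective hh)), ?_⟩
    rcases h2 with h2 | h2
    · exact Or.inl ((hz a ha).mpr h2)
    · exact Or.inr ((hz b hb).mpr h2)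

lemma star_card : C.ncard = ℓ + 1 := by
  rw [← Nat.card_coe_set_eq, Nat.card_congr ψ.toEquiv, Nat.card_eq_fintype_card,
    Fintype.card_fin]

lemma star_cn {a b x : V} (ha : a ∈ C) (hab : Gᶜ.Adj a b) :
    x ∈ G.commonNeighbors a b ↔ x ∉ C := by
  have hb : b ∈ C := hC.2.1 a ha b hab
  set cv : V := ((ψ.symm 0 : ↥C) : V) with hcv
  have hcvC : cv ∈ C := (ψ.symm 0).2
  rw [mem_commonNeighbors]
  constructor
  · rintro ⟨h1, h2⟩ hxC
    have hna : ¬ Gᶜ.Adj a x := fun hc => ((compl_adj G a x).mp hc).2 h1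
    have hnb : ¬ Gᶜ.Adj b x := fun hc => ((compl_adj G b x).mp hc).2 h2
    have hax : a ≠ x := h1.ne
    have hbx : b ≠ x := h2.ne
    have h3 := star_S1 hC ψ a x ha hxC
    have h4 := star_S1 hC ψ b x hb hxC
    have h5 := (star_S1 hC ψ a b ha hb).mp hab
    have hac : a ≠ cv := fun h => hna (h3.mpr ⟨hax, Or.inl h⟩)
    have hbc : b ≠ cv := fun h => hnb (h4.mpr ⟨hbx, Or.inl h⟩)
    rcases h5.2 with h | h
    · exact hac h
    · exact hbc h
  · intro hx
    have hxa : a ≠ x := fun h => hx (h ▸ ha)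
    have hxb : b ≠ x := fun h => hx (h ▸ hb)
    have hna : ¬ Gᶜ.Adj a x := fun hc => hx (hC.2.1 a ha x hc)
    have hnb : ¬ Gᶜ.Adj b x := fun hc => hx (hC.2.1 b hb x hc)
    exact ⟨adj_compl_of hxa hna, adj_compl_of hxb hnb⟩

lemma star_cn_card {a b : V} (ha : a ∈ C) (hab : Gᶜ.Adj a b) :
    (G.commonNeighbors a b).ncard = Fintype.card V - (ℓ + 1) := by
  have : G.commonNeighbors a b = Cᶜ := by
    ext x; rw [star_cn hC ψ ha hab]; rfl
  rw [this]
  have h := Set.ncard_add_ncard_compl C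
  rw [star_card hC ψ, Nat.card_eq_fintype_card] at h
  omega

open Classical in
lemma star_btw (hdisc : ¬Gᶜ.Connected) :
    btw G ((ψ.symm 0 : ↥C) : V) + (ℓ:ℝ) * (((Fintype.card V - (ℓ+1) : ℕ)) : ℝ)⁻¹
    = (1/2) * ∑ v : V, ∑ w : V,
        (if Gᶜ.Adj v w then ((G.commonNeighbors v w).ncard : ℝ)⁻¹ else 0) := by
  classical
  set cv : V := ((ψ.symm 0 : ↥C) : V) with hcvdef
  have hcvC : cv ∈ C := (ψ.symm 0).2
  set c : ℝ := (((Fintype.card V - (ℓ+1) : ℕ)) : ℝ) with hcdef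
  have hpoint : ∀ v w : V, F G cv v w =
      (if Gᶜ.Adj v w then ((G.commonNeighbors v w).ncard : ℝ)⁻¹ else 0)
      - (if Gᶜ.Adj v w ∧ v ∈ C then c⁻¹ else 0) := by
    intro v w
    by_cases hvw : Gᶜ.Adj v w
    · by_cases hvC : v ∈ C
      · have hnum : ¬(G.Adj v cv ∧ G.Adj w cv) := by
          intro h
          exact (star_cn hC ψ hvC hvw (x := cv)).mp ((mem_commonNeighbors G).mpr h) hcvC
        rw [F, if_pos hvw, if_neg hnum, if_pos hvw, if_pos ⟨hvw, hvC⟩,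
          star_cn_card hC ψ hvC hvw, ← hcdef]
        simp
      · have hwC : w ∉ C := fun hw => hvC (hC.2.1 w hw v hvw.symm)
        have h1 : G.Adj v cv := adj_compl_of (fun h => hvC (h ▸ hcvC))
          (fun hc => hvC (hC.2.1 cv hcvC v hc.symm))
        have h2 : G.Adj w cv := adj_compl_of (fun h => hwC (h ▸ hcvC))
          (fun hc => hwC (hC.2.1 cv hcvC w hc.symm))
        rw [F, if_pos hvw, if_pos ⟨h1, h2⟩, if_pos hvw, if_neg (by tauto)]
        rw [one_div, sub_zero]
    · simp [F, hvw]
  have hin : ∀ v : V, (∑ w : V, if Gᶜ.Adj v w ∧ v ∈ C then (1:ℝ) else 0)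
      = if v ∈ C then (if v = cv then (ℓ:ℝ) else 1) else 0 := by
    intro v
    by_cases hvC : v ∈ C
    · simp only [hvC, and_true, if_pos]
      rcases eq_or_ne v cv with rfl | hvne
      · rw [if_pos rfl]
        have hiff : ∀ w, Gᶜ.Adj cv w ↔ w ∈ (C.toFinset.erase cv) := by
          intro w
          rw [Finset.mem_erase, Set.mem_toFinset]
          constructor
          · intro h; exact ⟨h.ne', hC.2.1 cv hcvC w h⟩
          · rintro ⟨hne, hwC⟩
            exact (star_S1 hC ψ cv w hcvC hwC).mpr ⟨Ne.symm hne, Or.inl rfl⟩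
        simp only [hiff]
        rw [Finset.sum_ite_mem, Finset.univ_inter, Finset.sum_const,
          Finset.card_erase_of_mem (by rw [Set.mem_toFinset]; exact hcvC)]
        have hcc : C.toFinset.card = ℓ + 1 := by
          rw [← Set.ncard_eq_toFinset_card', star_card hC ψ]
        rw [hcc]; simp
      · rw [if_neg hvne]
        have hiff : ∀ w, Gᶜ.Adj v w ↔ w = cv := by
          intro w
          constructor
          · intro h
            have hwC := hC.2.1 v hvC w h
            have := (star_S1 hC ψ v w hvC hwC).mp h
            tauto
          · rintro rfl
            exact (star_S1 hC ψ v cv hvC hcvC).mpr ⟨hvne, Or.inr rfl⟩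
        simp only [hiff]
        rw [Finset.sum_ite_eq' Finset.univ cv (fun _ => (1:ℝ))]
        simp
    · simp [hvC]
  have hcount : ∑ v : V, ∑ w : V, (if Gᶜ.Adj v w ∧ v ∈ C then (1:ℝ) else 0)
      = 2 * ℓ := by
    rw [Finset.sum_congr rfl (fun v _ => hin v)]
    have hmem : ∀ v : V, (v ∈ C) = (v ∈ C.toFinset) := fun v => by
      rw [Set.mem_toFinset]
    simp only [hmem]
    rw [Finset.sum_ite_mem, Finset.univ_inter]
    have hcvmem : cv ∈ C.toFinset := by rw [Set.mem_toFinset]; exact hcvC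
    rw [← Finset.add_sum_erase _ _ hcvmem, if_pos rfl]
    have : ∑ v ∈ C.toFinset.erase cv, (if v = cv then (ℓ:ℝ) else 1)
        = ∑ v ∈ C.toFinset.erase cv, 1 := by
      refine Finset.sum_congr rfl (fun v hv => ?_)
      rw [if_neg (Finset.mem_erase.mp hv).1]
    rw [this, Finset.sum_const, Finset.card_erase_of_mem hcvmem]
    have hcc : C.toFinset.card = ℓ + 1 := by
      rw [← Set.ncard_eq_toFinset_card', star_card hC ψ]
    rw [hcc]
    simp; ring
  have hsplit : ∑ v : V, ∑ w : V, F G cv v w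
      = (∑ v : V, ∑ w : V, (if Gᶜ.Adj v w then ((G.commonNeighbors v w).ncard : ℝ)⁻¹ else 0))
        - (2 * ℓ) * c⁻¹ := by
    have : ∀ v w : V, (if Gᶜ.Adj v w ∧ v ∈ C then c⁻¹ else 0)
        = c⁻¹ * (if Gᶜ.Adj v w ∧ v ∈ C then (1:ℝ) else 0) := by
      intro v w; split_ifs <;> simp
    simp only [hpoint, this]
    rw [Finset.sum_congr rfl (fun v _ => Finset.sum_sub_distrib _ _), Finset.sum_sub_distrib]
    congr 1
    rw [Finset.sum_congr rfl (fun v _ => (Finset.mul_sum Finset.univ _ c⁻¹).symm),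
      ← Finset.mul_sum, hcount]
    ring
  rw [btw_eq hdisc, hsplit]
  ring

end Star

/-- If `G` is betweenness-uniform with `B(G) < 1` and `Ḡ` is disconnected,
then every component of `Ḡ` containing a vertex of degree at most 1 is a star `K_{1,ℓ}`,
and all star components of `Ḡ` have the same size. -/
theorem stmt12 {V : Type*} [Fintype V] [DecidableEq V] [Nonempty V] (G : SimpleGraph V)
    (hbug : IsBUG G) (hlow : avgBtw G < 1) (hdisc : ¬Gᶜ.Connected) :
    (∀ C : Set V, IsComponent Gᶜ C → (∃ v ∈ C, (Gᶜ.neighborSet v).ncard ≤ 1) →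
      ∃ ℓ : ℕ, Nonempty ((Gᶜ.induce C) ≃g starG ℓ)) ∧
    (∀ (C₁ C₂ : Set V) (ℓ₁ ℓ₂ : ℕ), IsComponent Gᶜ C₁ → IsComponent Gᶜ C₂ →
      Nonempty ((Gᶜ.induce C₁) ≃g starG ℓ₁) → Nonempty ((Gᶜ.induce C₂) ≃g starG ℓ₂) →
      ℓ₁ = ℓ₂) := by
  classical
  constructor
  · -- Part 1
    rintro C hC ⟨u, huC, hdeg⟩
    rcases Nat.le_one_iff_eq_zero_or_eq_one.mp hdeg with h0 | h1
    · -- isolated vertex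
      have hns : Gᶜ.neighborSet u = ∅ := (Set.ncard_eq_zero (Set.toFinite _)).mp h0
      have hstar : ∀ a b, Gᶜ.Adj a b → Gᶜ.Adj u a → b = u := by
        intro a b _ hua
        have : a ∈ Gᶜ.neighborSet u := hua
        rw [hns] at this
        exact absurd this (Set.notMem_empty a)
      have hmem := reach_center hC huC hstar
      refine build_iso C u huC (fun a b ha hb => ?_)
      constructor
      · intro hab
        refine ⟨hab.ne, ?_⟩
        rcases hmem a ha with rfl | hva
        · exact Or.inl rfl
        · exact Or.inr (hstar a b hab hva)
      · rintro ⟨hne, h | h⟩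
        · subst h
          rcases hmem b hb with rfl | hvb
          · exact absurd rfl hne
          · exact hvb
        · subst h
          rcases hmem a ha with rfl | hva
          · exact absurd rfl hne
          · exact hva.symm
    · -- a leaf
      obtain ⟨v, hv⟩ := Set.ncard_eq_one.mp h1
      have huv : Gᶜ.Adj u v := by
        have : v ∈ Gᶜ.neighborSet u := by rw [hv]; rfl
        exact this
      have hvC : v ∈ C := hC.2.1 u huC v huv
      have hstar := leaf_lemma hdisc hbug hv
      have hmem := reach_center hC hvC hstar
      refine build_iso C v hvC (fun a b ha hb => ?_)
      constructor
      · intro hab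
        refine ⟨hab.ne, ?_⟩
        rcases hmem a ha with rfl | hva
        · exact Or.inl rfl
        · exact Or.inr (hstar a b hab hva)
      · rintro ⟨hne, h | h⟩
        · subst h
          rcases hmem b hb with rfl | hvb
          · exact absurd rfl hne
          · exact hvb
        · subst h
          rcases hmem a ha with rfl | hva
          · exact absurd rfl hne
          · exact hva.symm
  · -- Part 2
    rintro C₁ C₂ ℓ₁ ℓ₂ hC₁ hC₂ ⟨ψ₁⟩ ⟨ψ₂⟩
    have h1 := star_btw hC₁ ψ₁ hdisc
    have h2 := star_btw hC₂ ψ₂ hdisc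
    have hb := hbug ((ψ₁.symm 0 : ↥C₁) : V) ((ψ₂.symm 0 : ↥C₂) : V)
    have hlt1 : ℓ₁ + 1 < Fintype.card V := by
      have hne := comp_ne_univ hdisc hC₁
      have hss : C₁ ⊂ Set.univ := Set.ssubset_univ_iff.mpr hne
      have := Set.ncard_lt_ncard hss Set.finite_univ
      rwa [star_card hC₁ ψ₁, Set.ncard_univ, Nat.card_eq_fintype_card] at this
    have hlt2 : ℓ₂ + 1 < Fintype.card V := by
      have hne := comp_ne_univ hdisc hC₂
      have hss : C₂ ⊂ Set.univ := Set.ssubset_univ_iff.mpr hne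
      have := Set.ncard_lt_ncard hss Set.finite_univ
      rwa [star_card hC₂ ψ₂, Set.ncard_univ, Nat.card_eq_fintype_card] at this
    set k₁ : ℕ := Fintype.card V - (ℓ₁ + 1) with hk₁def
    set k₂ : ℕ := Fintype.card V - (ℓ₂ + 1) with hk₂def
    have hk₁pos : 0 < k₁ := by omega
    have hk₂pos : 0 < k₂ := by omega
    have hk₁R : (0:ℝ) < (k₁:ℝ) := by exact_mod_cast hk₁pos
    have hk₂R : (0:ℝ) < (k₂:ℝ) := by exact_mod_cast hk₂pos
    have heq : (ℓ₁:ℝ) * (k₁:ℝ)⁻¹ = (ℓ₂:ℝ) * (k₂:ℝ)⁻¹ := by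
      rw [hb] at h1
      linarith [h1, h2]
    have hcross : (ℓ₁:ℝ) * (k₂:ℝ) = (ℓ₂:ℝ) * (k₁:ℝ) := by
      field_simp at heq
      linarith [heq]
    have hcrossN : ℓ₁ * k₂ = ℓ₂ * k₁ := by exact_mod_cast hcross
    have hsum : k₁ + ℓ₁ = k₂ + ℓ₂ := by omega
    have hmul : ℓ₁ * (k₁ + ℓ₁) = ℓ₂ * (k₁ + ℓ₁) := by
      calc ℓ₁ * (k₁ + ℓ₁) = ℓ₁ * (k₂ + ℓ₂) := by rw [hsum]
        _ = ℓ₁ * k₂ + ℓ₁ * ℓ₂ := by ring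
        _ = ℓ₂ * k₁ + ℓ₂ * ℓ₁ := by rw [hcrossN]; ring
        _ = ℓ₂ * (k₁ + ℓ₁) := by ring
    exact Nat.eq_of_mul_eq_mul_right (by omega) hmul

end BUG
end

section
/- For any integers k ≥ 2 and ℓ ≥ 0, the complement of the disjoint union of k copies of the star K_{1,ℓ} is a betweenness-uniform graph with betweenness value ℓ/(ℓ+1). -/
open SimpleGraph Finset BigOperators

namespace BUG

variable {V : Type*}

section General

variable {G : SimpleGraph V} {v w x : V}

lemma walk_eq_of_length_one (h : G.Adj v w) (p : G.Walk v w) (hp : p.length = 1) :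
    p = SimpleGraph.Walk.cons h SimpleGraph.Walk.nil := by
  cases p with
  | nil => simp at hp
  | cons h1 q =>
    cases q with
    | nil => rfl
    | cons h2 r => simp only [SimpleGraph.Walk.length_cons] at hp; omega

lemma sigma_of_adj (h : G.Adj v w) : sigma G v w = 1 := by
  have hd : G.dist v w = 1 := SimpleGraph.dist_eq_one_iff_adj.mpr h
  rw [sigma, Nat.card_eq_one_iff_unique]
  refine ⟨⟨?_⟩, ⟨⟨h.toWalk, by simp [hd, SimpleGraph.Adj.toWalk]⟩⟩⟩
  rintro ⟨p, hp⟩ ⟨q, hq⟩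
  rw [hd] at hp hq
  simp [walk_eq_of_length_one h p hp, walk_eq_of_length_one h q hq]

lemma sigmaVia_of_adj (h : G.Adj v w) : sigmaVia G v w x = 0 := by
  have hd : G.dist v w = 1 := SimpleGraph.dist_eq_one_iff_adj.mpr h
  rw [sigmaVia]
  have : IsEmpty {p : G.Walk v w // p.length = G.dist v w ∧ x ∈ p.support ∧ x ≠ v ∧ x ≠ w} := by
    constructor
    rintro ⟨p, hp, hxp, hxv, hxw⟩
    rw [hd] at hp
    rw [walk_eq_of_length_one h p hp] at hxp
    simp only [SimpleGraph.Walk.support_cons, SimpleGraph.Walk.support_nil,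
      List.mem_cons, List.mem_singleton, List.not_mem_nil, or_false] at hxp
    rcases hxp with rfl | rfl
    · exact hxv rfl
    · exact hxw rfl
  exact Nat.card_of_isEmpty

lemma walk_length_two (p : G.Walk v w) (hp : p.length = 2) :
    ∃ (y : V) (h1 : G.Adj v y) (h2 : G.Adj y w),
      p = SimpleGraph.Walk.cons h1 (SimpleGraph.Walk.cons h2 SimpleGraph.Walk.nil) := by
  cases p with
  | nil => simp at hp
  | cons h1 q =>
    cases q with
    | nil => simp at hp
    | cons h2 r =>
      cases r with
      | nil => exact ⟨_, h1, h2, rfl⟩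
      | cons h3 s => simp only [SimpleGraph.Walk.length_cons] at hp; omega

lemma sigma_of_dist2 (h2 : G.dist v w = 2) :
    sigma G v w = Nat.card (G.commonNeighbors v w) := by
  rw [sigma]
  apply Nat.card_congr
  exact (Equiv.subtypeEquivRight (fun p => by rw [h2])).trans
    (G.walkLengthTwoEquivCommonNeighbors v w)

open Classical in
lemma sigmaVia_of_dist2 (h2 : G.dist v w = 2) :
    sigmaVia G v w x = if x ∈ G.commonNeighbors v w then 1 else 0 := by
  rw [sigmaVia]
  have key : ∀ (p : G.Walk v w), p.length = G.dist v w → x ∈ p.support → x ≠ v → x ≠ w →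
      ∃ (h1 : G.Adj v x) (h2 : G.Adj x w),
        p = SimpleGraph.Walk.cons h1 (SimpleGraph.Walk.cons h2 SimpleGraph.Walk.nil) := by
    intro p hp hxp hxv hxw
    rw [h2] at hp
    obtain ⟨y, a1, a2, rfl⟩ := walk_length_two p hp
    simp only [SimpleGraph.Walk.support_cons, SimpleGraph.Walk.support_nil,
      List.mem_cons, List.not_mem_nil, or_false] at hxp
    rcases hxp with rfl | rfl | rfl
    · exact absurd rfl hxv
    · exact ⟨a1, a2, rfl⟩
    · exact absurd rfl hxw
  split_ifs with hx
  · rw [SimpleGraph.mem_commonNeighbors] at hx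
    rw [Nat.card_eq_one_iff_unique]
    constructor
    · constructor
      rintro ⟨p, hp, hxp, hxv, hxw⟩ ⟨q, hq, hxq, hxv', hxw'⟩
      obtain ⟨a1, a2, rfl⟩ := key p hp hxp hxv hxw
      obtain ⟨b1, b2, rfl⟩ := key q hq hxq hxv' hxw'
      rfl
    · refine ⟨⟨SimpleGraph.Walk.cons hx.1 (SimpleGraph.Walk.cons hx.2.symm
        SimpleGraph.Walk.nil), ?_, ?_, hx.1.ne', hx.2.ne'⟩⟩
      · simp [h2]
      · simp
  · have : IsEmpty {p : G.Walk v w // p.length = G.dist v w ∧ x ∈ p.support ∧ x ≠ v ∧ x ≠ w} := by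
      constructor
      rintro ⟨p, hp, hxp, hxv, hxw⟩
      obtain ⟨a1, a2, -⟩ := key p hp hxp hxv hxw
      exact hx ((SimpleGraph.mem_commonNeighbors G).mpr ⟨a1, a2.symm⟩)
    exact Nat.card_of_isEmpty

end General

section Concrete

variable {k ℓ : ℕ}

lemma adjC (p q : Fin k × Fin (ℓ+1)) :
    (copies k (starG ℓ))ᶜ.Adj p q ↔ p ≠ q ∧ ¬(p.1 = q.1 ∧ (p.2 = 0 ∨ q.2 = 0)) := by
  have hc : (copies k (starG ℓ)).Adj p q ↔ (p.1 = q.1 ∧ (starG ℓ).Adj p.2 q.2) := Iff.rfl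
  rw [SimpleGraph.compl_adj, hc]
  simp only [starG, SimpleGraph.fromRel_adj]
  constructor
  · rintro ⟨hne, hn⟩
    exact ⟨hne, fun h => hn ⟨h.1, fun h22 => hne (Prod.ext h.1 h22), h.2⟩⟩
  · rintro ⟨hne, hn⟩
    exact ⟨hne, fun h => hn ⟨h.1, h.2.2⟩⟩

lemma adj_of_fst_ne {p q : Fin k × Fin (ℓ+1)} (h : p.1 ≠ q.1) :
    (copies k (starG ℓ))ᶜ.Adj p q :=
  (adjC p q).mpr ⟨fun he => h (by rw [he]), fun hc => h hc.1⟩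

lemma dist_two_s13 (hk : 2 ≤ k) {a : Fin k} {s s' : Fin (ℓ+1)} (hss : s ≠ s')
    (h0 : s = 0 ∨ s' = 0) :
    (copies k (starG ℓ))ᶜ.dist (a, s) (a, s') = 2 := by
  obtain ⟨b, hba⟩ : ∃ b : Fin k, b ≠ a :=
    Fintype.exists_ne_of_one_lt_card (by simp; omega) a
  have h1 : (copies k (starG ℓ))ᶜ.Adj (a, s) (b, (0 : Fin (ℓ+1))) := adj_of_fst_ne hba.symm
  have h2 : (copies k (starG ℓ))ᶜ.Adj (b, (0 : Fin (ℓ+1))) (a, s') := adj_of_fst_ne hba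
  have hW : ((copies k (starG ℓ))ᶜ.dist (a, s) (a, s')) ≤ 2 := by
    have := SimpleGraph.dist_le
      (SimpleGraph.Walk.cons h1 (SimpleGraph.Walk.cons h2 SimpleGraph.Walk.nil))
    simpa using this
  have hne : ((a, s) : Fin k × Fin (ℓ+1)) ≠ (a, s') := by
    simp [Prod.ext_iff, hss]
  have hpos : 0 < (copies k (starG ℓ))ᶜ.dist (a, s) (a, s') :=
    SimpleGraph.Reachable.pos_dist_of_ne
      ⟨SimpleGraph.Walk.cons h1 (SimpleGraph.Walk.cons h2 SimpleGraph.Walk.nil)⟩ hne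
  have hd1 : (copies k (starG ℓ))ᶜ.dist (a, s) (a, s') ≠ 1 := by
    rw [Ne, SimpleGraph.dist_eq_one_iff_adj, adjC]
    rintro ⟨-, hn⟩
    exact hn ⟨rfl, h0⟩
  omega

lemma mem_cn {a : Fin k} {s s' : Fin (ℓ+1)} (h0 : s = 0 ∨ s' = 0)
    (x : Fin k × Fin (ℓ+1)) :
    x ∈ (copies k (starG ℓ))ᶜ.commonNeighbors (a, s) (a, s') ↔ x.1 ≠ a := by
  rw [SimpleGraph.mem_commonNeighbors]
  constructor
  · rintro ⟨h1, h2⟩ hxa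
    rw [adjC] at h1 h2
    rcases h0 with rfl | rfl
    · exact h1.2 ⟨hxa.symm, Or.inl rfl⟩
    · exact h2.2 ⟨hxa.symm, Or.inl rfl⟩
  · intro hxa
    exact ⟨adj_of_fst_ne (Ne.symm hxa), adj_of_fst_ne (Ne.symm hxa)⟩

lemma card_cn {a : Fin k} {s s' : Fin (ℓ+1)} (h0 : s = 0 ∨ s' = 0) :
    Nat.card ((copies k (starG ℓ))ᶜ.commonNeighbors (a, s) (a, s')) = (k - 1) * (ℓ + 1) := by
  have hset : (copies k (starG ℓ))ᶜ.commonNeighbors (a, s) (a, s')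
      = {x : Fin k × Fin (ℓ+1) | x.1 ≠ a} := Set.ext (mem_cn h0)
  rw [hset]
  have e : {x : Fin k × Fin (ℓ+1) // x.1 ≠ a} ≃ {b : Fin k // b ≠ a} × Fin (ℓ+1) :=
    { toFun := fun x => (⟨x.1.1, x.2⟩, x.1.2)
      invFun := fun y => ⟨(y.1.1, y.2), y.1.2⟩
      left_inv := fun x => rfl
      right_inv := fun y => rfl }
  rw [show Nat.card {x : Fin k × Fin (ℓ+1) | x.1 ≠ a} = Nat.card ({b : Fin k // b ≠ a} × Fin (ℓ+1)) from Nat.card_congr e,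
    Nat.card_prod, Nat.card_eq_fintype_card, Nat.card_eq_fintype_card, Fintype.card_fin]
  congr 1
  have : Fintype.card {b : Fin k // ¬ b = a} = Fintype.card (Fin k) - Fintype.card {b : Fin k // b = a} :=
    Fintype.card_subtype_compl _
  simpa [Fintype.card_subtype_eq] using this

end Concrete

lemma term_eq {k ℓ : ℕ} (hk : 2 ≤ k) (x v w : Fin k × Fin (ℓ+1)) :
    (if v ≠ w then (sigmaVia (copies k (starG ℓ))ᶜ v w x : ℝ) /
        (sigma (copies k (starG ℓ))ᶜ v w : ℝ) else 0)
      = (if v.1 = w.1 ∧ v.1 ≠ x.1 then (1:ℝ) else 0)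
        * (if v.2 ≠ w.2 ∧ (v.2 = 0 ∨ w.2 = 0) then
            (1:ℝ) / (((k - 1) * (ℓ + 1) : ℕ) : ℝ) else 0) := by
  by_cases hvw : v = w
  · subst hvw; simp
  · rw [if_pos hvw]
    by_cases hadj : (copies k (starG ℓ))ᶜ.Adj v w
    · rw [sigma_of_adj hadj, sigmaVia_of_adj hadj]
      have hnd : ¬(v.1 = w.1 ∧ (v.2 = 0 ∨ w.2 = 0)) := ((adjC v w).mp hadj).2
      by_cases hA : v.1 = w.1
      · have : ¬(v.2 = 0 ∨ w.2 = 0) := fun h => hnd ⟨hA, h⟩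
        simp [this]
      · simp [hA]
    · have hD : v.1 = w.1 ∧ (v.2 = 0 ∨ w.2 = 0) := by
        by_contra hD; exact hadj ((adjC v w).mpr ⟨hvw, hD⟩)
      obtain ⟨a, s⟩ := v
      obtain ⟨a', s'⟩ := w
      obtain rfl : a = a' := hD.1
      have hss : s ≠ s' := fun h => hvw (by rw [h])
      have hd := dist_two_s13 (a := a) hk hss hD.2
      rw [sigma_of_dist2 hd, card_cn hD.2, sigmaVia_of_dist2 hd]
      simp only [mem_cn hD.2]
      by_cases hxa : a = x.1
      · simp [← hxa]
      · simp [hxa, Ne.symm hxa, hss, hD.2]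

lemma sum_prod_fac {k ℓ : ℕ} (F : Fin k → ℝ) (B : Fin (ℓ+1) → ℝ) :
    ∑ v : Fin k × Fin (ℓ+1), F v.1 * B v.2 = (∑ a, F a) * (∑ s, B s) := by
  rw [Fintype.sum_prod_type]
  simp_rw [← Finset.mul_sum]
  rw [← Finset.sum_mul]

lemma btw_eq_s13 {k ℓ : ℕ} (hk : 2 ≤ k) (x : Fin k × Fin (ℓ+1)) :
    btw (copies k (starG ℓ))ᶜ x = (ℓ : ℝ) / ((ℓ : ℝ) + 1) := by
  have hk1 : (1:ℝ) ≤ (k:ℝ) := by exact_mod_cast Nat.one_le_of_lt hk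
  set c : ℝ := (1:ℝ) / (((k - 1) * (ℓ + 1) : ℕ) : ℝ) with hc
  rw [btw]
  have h1 : ∑ v : Fin k × Fin (ℓ+1), ∑ w : Fin k × Fin (ℓ+1),
      (if v ≠ w then (sigmaVia (copies k (starG ℓ))ᶜ v w x : ℝ) /
        (sigma (copies k (starG ℓ))ᶜ v w : ℝ) else 0)
      = ∑ v : Fin k × Fin (ℓ+1), ∑ w : Fin k × Fin (ℓ+1),
        (if v.1 = w.1 ∧ v.1 ≠ x.1 then (1:ℝ) else 0)
        * (if v.2 ≠ w.2 ∧ (v.2 = 0 ∨ w.2 = 0) then c else 0) :=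
    Finset.sum_congr rfl fun v _ => Finset.sum_congr rfl fun w _ => term_eq hk x v w
  rw [h1]
  have h2 : ∀ v : Fin k × Fin (ℓ+1), ∑ w : Fin k × Fin (ℓ+1),
      (if v.1 = w.1 ∧ v.1 ≠ x.1 then (1:ℝ) else 0)
        * (if v.2 ≠ w.2 ∧ (v.2 = 0 ∨ w.2 = 0) then c else 0)
      = (∑ a', if v.1 = a' ∧ v.1 ≠ x.1 then (1:ℝ) else 0)
        * (∑ s', if v.2 ≠ s' ∧ (v.2 = 0 ∨ s' = 0) then c else 0) := fun v =>
    sum_prod_fac (fun a' => if v.1 = a' ∧ v.1 ≠ x.1 then (1:ℝ) else 0)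
      (fun s' => if v.2 ≠ s' ∧ (v.2 = 0 ∨ s' = 0) then c else 0)
  simp_rw [h2]
  rw [sum_prod_fac (fun a => ∑ a', if a = a' ∧ a ≠ x.1 then (1:ℝ) else 0)
    (fun s => ∑ s', if s ≠ s' ∧ (s = 0 ∨ s' = 0) then c else 0)]
  -- first factor
  have hA : (∑ a : Fin k, ∑ a', if a = a' ∧ a ≠ x.1 then (1:ℝ) else 0) = (k:ℝ) - 1 := by
    have e1 : ∀ a : Fin k, (∑ a', if a = a' ∧ a ≠ x.1 then (1:ℝ) else 0)
        = if a ≠ x.1 then (1:ℝ) else 0 := by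
      intro a
      simp_rw [ite_and]
      rw [Finset.sum_ite_eq]
      simp
    simp_rw [e1]
    have e2 : ∀ a : Fin k, (if a ≠ x.1 then (1:ℝ) else 0) = 1 - if a = x.1 then (1:ℝ) else 0 := by
      intro a; by_cases h : a = x.1 <;> simp [h]
    simp_rw [e2]
    rw [Finset.sum_sub_distrib, Finset.sum_const, Finset.card_univ, Fintype.card_fin,
      Finset.sum_ite_eq' Finset.univ x.1 (fun _ => (1:ℝ)), if_pos (Finset.mem_univ _)]
    simp
  rw [hA]
  -- second factor
  have hB : (∑ s : Fin (ℓ+1), ∑ s', if s ≠ s' ∧ (s = 0 ∨ s' = 0) then c else 0)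
      = 2 * (ℓ:ℝ) * c := by
    have inner : ∀ s : Fin (ℓ+1), (∑ s', if s ≠ s' ∧ (s = 0 ∨ s' = 0) then c else 0)
        = if s = 0 then (ℓ:ℝ) * c else c := by
      intro s
      by_cases hs : s = 0
      · subst hs
        rw [if_pos rfl]
        have e : ∀ s' : Fin (ℓ+1),
            (if (0 : Fin (ℓ+1)) ≠ s' ∧ ((0 : Fin (ℓ+1)) = 0 ∨ s' = 0) then c else 0)
            = c - if s' = 0 then c else 0 := by
          intro s'
          by_cases h : s' = 0
          · rw [if_pos h, if_neg (fun hh => hh.1 h.symm), sub_self]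
          · rw [if_neg h, if_pos ⟨Ne.symm h, Or.inl rfl⟩, sub_zero]
        rw [Finset.sum_congr rfl (fun t _ => e t)]
        rw [Finset.sum_sub_distrib, Finset.sum_const, Finset.card_univ, Fintype.card_fin,
          Finset.sum_ite_eq' Finset.univ (0 : Fin (ℓ+1)) (fun _ => c),
          if_pos (Finset.mem_univ _)]
        push_cast
        ring
      · rw [if_neg hs]
        have e : ∀ s' : Fin (ℓ+1), (if s ≠ s' ∧ (s = 0 ∨ s' = 0) then c else 0)
            = if s' = 0 then c else 0 := by
          intro s'
          by_cases h : s' = 0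
          · subst h
            rw [if_pos ⟨hs, Or.inr rfl⟩, if_pos rfl]
          · rw [if_neg h, if_neg (fun hh => hh.2.elim hs h)]
        rw [Finset.sum_congr rfl (fun t _ => e t)]
        rw [Finset.sum_ite_eq' Finset.univ (0 : Fin (ℓ+1)) (fun _ => c),
          if_pos (Finset.mem_univ _)]
    simp_rw [inner]
    have e2 : ∀ s : Fin (ℓ+1), (if s = 0 then (ℓ:ℝ) * c else c)
        = c + if s = 0 then (ℓ:ℝ) * c - c else 0 := by
      intro s; by_cases h : s = 0 <;> simp [h]
    simp_rw [e2]
    rw [Finset.sum_add_distrib, Finset.sum_const, Finset.card_univ, Fintype.card_fin,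
      Finset.sum_ite_eq' Finset.univ (0 : Fin (ℓ+1)) (fun _ => (ℓ:ℝ) * c - c),
      if_pos (Finset.mem_univ _)]
    push_cast
    ring
  rw [hB, hc]
  have hcast : (((k - 1) * (ℓ + 1) : ℕ) : ℝ) = ((k:ℝ) - 1) * ((ℓ:ℝ) + 1) := by
    push_cast [Nat.cast_sub (by omega : 1 ≤ k)]
    ring
  rw [hcast]
  have hkne : (k:ℝ) - 1 ≠ 0 := by
    have : (2:ℝ) ≤ (k:ℝ) := by exact_mod_cast hk
    linarith
  have hlne : (ℓ:ℝ) + 1 ≠ 0 := by positivity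
  field_simp


/-- For `k ≥ 2`, `ℓ ≥ 0`, the complement of the disjoint union of `k`
copies of `K_{1,ℓ}` is betweenness-uniform with betweenness value `ℓ/(ℓ+1)`. -/
theorem stmt13 (k ℓ : ℕ) (hk : 2 ≤ k) :
    IsBUG (copies k (starG ℓ))ᶜ ∧
    ∀ x : Fin k × Fin (ℓ+1), btw (copies k (starG ℓ))ᶜ x = (ℓ : ℝ) / ((ℓ : ℝ) + 1) := by
  refine ⟨fun x y => ?_, fun x => btw_eq_s13 hk x⟩
  rw [btw_eq_s13 hk x, btw_eq_s13 hk y]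

end BUG
end
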